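/- Let p be a prime with p ≢ 3 (mod 4), F = ℚ(√p), and ε the fundamental unit of O_F. Then Nm_{F/ℚ}(ε) = -1, and consequently the group of totally positive units O_{F,+}^× equals the group of squares of units. -/

import Mathlib

open NumberField Polynomial


private lemma sq_mod_four (n : ℕ) : n ^ 2 % 4 = 0 ∨ n ^ 2 % 4 = 1 := by
  rcases Nat.even_or_odd n with ⟨m, rfl⟩ | ⟨m, rfl⟩
  · have h : (m + m) ^ 2 = 4 * (m * m) := by ring
    omega
  · have h : (2 * m + 1) ^ 2 = 4 * (m * m + m) + 1 := by ring
    omega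

private lemma nat_sq_of_coprime {a b c : ℕ} (h : Nat.Coprime a b) (heq : a * b = c ^ 2) :
    ∃ d : ℕ, a = d ^ 2 := by
  refine exists_eq_pow_of_mul_eq_pow (α := ℕ) ?_ heq
  rw [Nat.isUnit_iff]; exact h

private lemma coprime_succ (n : ℕ) : Nat.Coprime n (n + 1) :=
  Nat.dvd_one.mp (by
    simpa using Nat.dvd_sub' (Nat.gcd_dvd_right n (n + 1)) (Nat.gcd_dvd_left n (n + 1)))

private lemma descent (p : ℕ) (hp : p.Prime) (hp4 : p % 4 ≠ 3) :
    ∀ Y : ℕ, 0 < Y → (∃ X : ℕ, X ^ 2 = p * Y ^ 2 + 1) →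
      ∃ a b : ℕ, a ^ 2 + 1 = p * b ^ 2 := by
  intro Y
  induction Y using Nat.strong_induction_on with
  | _ Y IH =>
  rintro hY ⟨X, hX⟩
  have hpm : p = 2 ∨ p % 4 = 1 := by
    rcases hp.eq_two_or_odd with h | h
    · exact Or.inl h
    · right; omega
  -- X is odd
  have hXodd : Odd X := by
    rw [Nat.odd_iff]
    by_contra hXe
    have ⟨k, hk⟩ : Even X := Nat.even_iff.mpr (by omega)
    subst hk
    have e1 : (k + k) ^ 2 = 4 * (k * k) := by ring
    rcases hpm with rfl | h1
    · -- p = 2 : LHS div by 4, RHS = 2*Y^2+1 odd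
      have e2 : 2 * Y ^ 2 = 2 * (Y * Y) := by ring
      omega
    · obtain ⟨s, hs⟩ : ∃ s, p = 4 * s + 1 := ⟨p / 4, by omega⟩
      subst hs
      have e2 : (4 * s + 1) * Y ^ 2 = 4 * (s * (Y * Y)) + Y ^ 2 := by ring
      have := sq_mod_four Y
      omega
  obtain ⟨k, rfl⟩ := hXodd
  have hX' : 4 * (k * (k + 1)) = p * Y ^ 2 := by
    have e : (2 * k + 1) ^ 2 = 4 * (k * (k + 1)) + 1 := by ring
    omega
  -- Y is even
  have hYe : Even Y := by
    by_contra hYo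
    have hYodd : Odd Y := Nat.odd_iff.mpr (by
      have := Nat.even_iff.not.mp hYo; omega)
    rcases hpm with rfl | h1
    · have hY2 : Odd (Y * Y) := hYodd.mul hYodd
      have e2 : 2 * Y ^ 2 = 2 * (Y * Y) := by ring
      obtain ⟨t, ht⟩ := hY2
      omega
    · have hpodd : Odd p := Nat.odd_iff.mpr (by omega)
      have h3 : Odd (p * (Y * Y)) := hpodd.mul (hYodd.mul hYodd)
      have e2 : p * Y ^ 2 = p * (Y * Y) := by ring
      obtain ⟨t, ht⟩ := h3
      omega
  obtain ⟨m, rfl⟩ := hYe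
  have hm : 0 < m := by omega
  have hk2 : k * (k + 1) = p * m ^ 2 := by
    have e : p * (m + m) ^ 2 = 4 * (p * m ^ 2) := by ring
    omega
  have hkpos : 0 < k := by
    rcases Nat.eq_zero_or_pos k with rfl | h
    · exfalso
      have h1 : 0 < p * m ^ 2 := Nat.mul_pos hp.pos (pow_pos hm 2)
      simp at hk2
      omega
    · exact h
  have hpd : p ∣ k * (k + 1) := ⟨m ^ 2, hk2⟩
  rcases (Nat.Prime.dvd_mul hp).mp hpd with hdk | hdk1
  · -- p ∣ k : descent
    obtain ⟨t, rfl⟩ := hdk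
    have ht2 : t * (p * t + 1) = m ^ 2 := by
      refine Nat.eq_of_mul_eq_mul_left hp.pos ?_
      calc p * (t * (p * t + 1)) = p * t * (p * t + 1) := by ring
        _ = p * m ^ 2 := hk2
    have hco : Nat.Coprime t (p * t + 1) :=
      (coprime_succ (p * t)).coprime_dvd_left ⟨p, mul_comm p t⟩
    obtain ⟨u, hu⟩ := nat_sq_of_coprime hco ht2
    obtain ⟨v, hv⟩ := nat_sq_of_coprime hco.symm (by rw [mul_comm]; exact ht2)
    have hupos : 0 < u := by
      rcases Nat.eq_zero_or_pos u with rfl | h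
      · exfalso
        rw [pow_two, Nat.mul_zero] at hu
        subst hu
        rw [Nat.zero_mul] at ht2
        have := pow_pos hm 2
        omega
      · exact h
    have hvpos : 0 < v := by
      rcases Nat.eq_zero_or_pos v with rfl | h
      · exfalso
        rw [pow_two, Nat.mul_zero] at hv
        exact Nat.succ_ne_zero _ hv
      · exact h
    have hmuv : m = u * v := by
      refine Nat.pow_left_injective (n := 2) (by norm_num) ?_
      show m ^ 2 = (u * v) ^ 2
      rw [← ht2, hv, hu]; ring
    have hlt : u < m + m := by
      have h1 : u ≤ u * v := Nat.le_mul_of_pos_right u hvpos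
      omega
    exact IH u hlt hupos ⟨v, by rw [← hv, hu]⟩
  · -- p ∣ k+1 : done
    obtain ⟨t, ht⟩ := hdk1
    have ht2 : k * t = m ^ 2 := by
      refine Nat.eq_of_mul_eq_mul_left hp.pos ?_
      calc p * (k * t) = k * (p * t) := by ring
        _ = k * (k + 1) := by rw [← ht]
        _ = p * m ^ 2 := hk2
    have hco : Nat.Coprime k t :=
      (coprime_succ k).coprime_dvd_right ⟨p, by rw [ht]; ring⟩
    obtain ⟨a, ha⟩ := nat_sq_of_coprime hco ht2
    obtain ⟨b, hb⟩ := nat_sq_of_coprime hco.symm (by rw [mul_comm]; exact ht2)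
    refine ⟨a, b, ?_⟩
    rw [← ha, ← hb]
    exact ht

private lemma neg_pell' (p : ℕ) (hp : p.Prime) (hp4 : p % 4 ≠ 3) :
    ∃ a b : ℕ, a ^ 2 + 1 = p * b ^ 2 := by
  have hd0 : (0 : ℤ) < (p : ℤ) := by exact_mod_cast hp.pos
  have hds : ¬IsSquare ((p : ℕ) : ℤ) :=
    (Nat.prime_iff_prime_int.mp hp).not_isSquare
  obtain ⟨x, y, h, hy⟩ := Pell.exists_of_not_isSquare hd0 hds
  refine descent p hp hp4 y.natAbs (Int.natAbs_pos.mpr hy) ⟨x.natAbs, ?_⟩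
  have h' : (x.natAbs : ℤ) ^ 2 = (p : ℤ) * (y.natAbs : ℤ) ^ 2 + 1 := by
    rw [Int.natAbs_sq, Int.natAbs_sq]; linarith
  exact_mod_cast h'



private lemma norm_form (p : ℕ) (hp : p.Prime) (K : Type*) [Field K] [NumberField K]
    (h2 : Module.finrank ℚ K = 2) (θ : K) (hθ : θ ^ 2 = (p : K)) :
    ∃ φ₁ φ₂ : K →ₐ[ℚ] ℝ, φ₁ θ = Real.sqrt p ∧ φ₂ θ = -Real.sqrt p ∧
      ∀ x : K, ((Algebra.norm ℚ x : ℚ) : ℝ) = φ₁ x * φ₂ x := by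
  classical
  have hθQ : ∀ q : ℚ, algebraMap ℚ K q ≠ θ := by
    intro q hq
    have h1 : algebraMap ℚ K (q ^ 2) = algebraMap ℚ K ((p : ℚ)) := by
      rw [map_pow, hq, hθ, map_natCast]
    have h2' : q ^ 2 = (p : ℚ) := (algebraMap ℚ K).injective h1
    have h3 : ((q : ℝ)) ^ 2 = (p : ℝ) := by exact_mod_cast h2'
    refine hp.irrational_sqrt ⟨|q|, ?_⟩
    rw [← h3, Real.sqrt_sq_eq_abs]
    push_cast
    rfl
  have hθ0 : θ ≠ 0 := by
    intro h0
    rw [h0] at hθ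
    have : ((p : ℕ) : K) ≠ 0 := Nat.cast_ne_zero.mpr hp.ne_zero
    simp at hθ
    exact this hθ.symm
  have hli : LinearIndependent ℚ ![(1 : K), θ] := by
    rw [linearIndependent_fin2]
    refine ⟨by simp [hθ0], fun a ha => ?_⟩
    simp only [Matrix.cons_val_one, Matrix.head_cons, Matrix.cons_val_zero] at ha
    apply hθQ a⁻¹
    rw [map_inv₀]
    refine (eq_inv_of_mul_eq_one_left ?_).symm
    rw [mul_comm, ← Algebra.smul_def]
    exact ha
  have hcard : Fintype.card (Fin 2) = Module.finrank ℚ K := by simp [h2]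
  let b : Module.Basis (Fin 2) ℚ K := basisOfLinearIndependentOfCardEqFinrank hli hcard
  have hb : ⇑b = ![(1 : K), θ] := coe_basisOfLinearIndependentOfCardEqFinrank hli hcard
  let pb : PowerBasis ℚ K :=
    { gen := θ, dim := 2, basis := b,
      basis_eq_pow := by
        intro i
        rw [show b i = ![(1 : K), θ] i from congrFun hb i]
        fin_cases i <;> simp }
  have hpbgen : pb.gen = θ := rfl
  have hint : IsIntegral ℚ θ := IsIntegral.of_finite ℚ θ
  have hmon : (X ^ 2 - C ((p : ℕ) : ℚ)).Monic := monic_X_pow_sub_C _ two_ne_zero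
  have haev : (aeval θ) (X ^ 2 - C ((p : ℕ) : ℚ)) = 0 := by
    simp [hθ]
  have hdvd : minpoly ℚ θ ∣ X ^ 2 - C ((p : ℕ) : ℚ) := minpoly.dvd ℚ θ haev
  have hdeg : (minpoly ℚ θ).natDegree = 2 := pb.natDegree_minpoly
  have hmin : minpoly ℚ θ = X ^ 2 - C ((p : ℕ) : ℚ) := by
    refine (eq_of_monic_of_dvd_of_natDegree_le (minpoly.monic hint) hmon hdvd ?_).symm
    rw [hdeg, natDegree_X_pow_sub_C]
  have hsq : Real.sqrt p ^ 2 = ((p : ℕ) : ℝ) := Real.sq_sqrt (by positivity)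
  have hroot1 : (aeval (Real.sqrt p)) (minpoly ℚ θ) = 0 := by
    rw [hmin]; simp [hsq]
  have hroot2 : (aeval (-Real.sqrt p)) (minpoly ℚ θ) = 0 := by
    rw [hmin]; simp [hsq]
  let φ₁ : K →ₐ[ℚ] ℝ := pb.lift _ hroot1
  let φ₂ : K →ₐ[ℚ] ℝ := pb.lift _ hroot2
  have hφ₁θ : φ₁ θ = Real.sqrt p := pb.lift_gen _ hroot1
  have hφ₂θ : φ₂ θ = -Real.sqrt p := pb.lift_gen _ hroot2
  have hsp0 : (0 : ℝ) < Real.sqrt p := Real.sqrt_pos.mpr (by exact_mod_cast hp.pos)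
  let ι : ℝ →ₐ[ℚ] ℂ := Complex.ofRealAm.restrictScalars ℚ
  let ψ₁ : K →ₐ[ℚ] ℂ := ι.comp φ₁
  let ψ₂ : K →ₐ[ℚ] ℂ := ι.comp φ₂
  have hψ₁x : ∀ x : K, ψ₁ x = ((φ₁ x : ℝ) : ℂ) := fun x => rfl
  have hψ₂x : ∀ x : K, ψ₂ x = ((φ₂ x : ℝ) : ℂ) := fun x => rfl
  have hψ₁θ : ψ₁ θ = ((Real.sqrt p : ℝ) : ℂ) := by rw [hψ₁x, hφ₁θ]
  have hψ₂θ : ψ₂ θ = ((-Real.sqrt p : ℝ) : ℂ) := by rw [hψ₂x, hφ₂θ]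
  have hne : ψ₁ ≠ ψ₂ := by
    intro hc
    have : ψ₁ θ = ψ₂ θ := by rw [hc]
    rw [hψ₁θ, hψ₂θ] at this
    have h5 : (Real.sqrt p : ℝ) = -Real.sqrt p := by exact_mod_cast this
    linarith
  have hall : ∀ σ : K →ₐ[ℚ] ℂ, σ = ψ₁ ∨ σ = ψ₂ := by
    intro σ
    have hσθ : σ θ ^ 2 = ((p : ℕ) : ℂ) := by rw [← map_pow, hθ, map_natCast]
    have hc2 : ((Real.sqrt p : ℝ) : ℂ) ^ 2 = ((p : ℕ) : ℂ) := by exact_mod_cast hsq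
    have hfac : (σ θ - ((Real.sqrt p : ℝ) : ℂ)) * (σ θ + ((Real.sqrt p : ℝ) : ℂ)) = 0 := by
      have : σ θ ^ 2 - ((Real.sqrt p : ℝ) : ℂ) ^ 2 = 0 := by rw [hσθ, hc2]; ring
      calc (σ θ - ((Real.sqrt p : ℝ) : ℂ)) * (σ θ + ((Real.sqrt p : ℝ) : ℂ))
          = σ θ ^ 2 - ((Real.sqrt p : ℝ) : ℂ) ^ 2 := by ring
        _ = 0 := this
    rcases mul_eq_zero.mp hfac with h | h
    · left
      refine pb.algHom_ext ?_
      show σ θ = ψ₁ θ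
      rw [hψ₁θ]
      linear_combination h
    · right
      refine pb.algHom_ext ?_
      show σ θ = ψ₂ θ
      rw [hψ₂θ]
      push_cast
      linear_combination h
  have huniv : (Finset.univ : Finset (K →ₐ[ℚ] ℂ)) = {ψ₁, ψ₂} := by
    apply Finset.ext
    intro σ
    simp only [Finset.mem_univ, Finset.mem_insert, Finset.mem_singleton, true_iff]
    exact hall σ
  refine ⟨φ₁, φ₂, hφ₁θ, hφ₂θ, fun x => ?_⟩
  have hnc : algebraMap ℚ ℂ (Algebra.norm ℚ x) = ψ₁ x * ψ₂ x := by
    rw [Algebra.norm_eq_prod_embeddings (K := ℚ) (L := K) (E := ℂ) x, huniv,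
      Finset.prod_pair hne]
  have hcc : ((Algebra.norm ℚ x : ℚ) : ℂ) = (((φ₁ x * φ₂ x : ℝ)) : ℂ) := by
    rw [← eq_ratCast (algebraMap ℚ ℂ), hnc, hψ₁x, hψ₂x]
    push_cast
    ring
  exact_mod_cast hcc


/-- For a prime `p ≢ 3 (mod 4)` and `F = ℚ(√p)`, the fundamental
unit `ε` of `O_F` has `Nm_{F/ℚ}(ε) = -1`, and consequently the group of totally
positive units equals the group of squares of units. -/
theorem fundamental_unit_norm_neg_one
    (p : ℕ) (hp : p.Prime) (hp4 : p % 4 ≠ 3)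
    (K : Type*) [Field K] [NumberField K]
    (h2 : Module.finrank ℚ K = 2) (θ : K) (hθ : θ ^ 2 = (p : K))
    (ε : (𝓞 K)ˣ)
    (hε : ∀ u : (𝓞 K)ˣ, ∃ n : ℤ, u = ε ^ n ∨ u = -ε ^ n) :
    Algebra.norm ℚ (algebraMap (𝓞 K) K ↑ε) = -1 ∧
      {u : (𝓞 K)ˣ | ∀ φ : K →+* ℝ, 0 < φ (algebraMap (𝓞 K) K ↑u)} =
        {u : (𝓞 K)ˣ | ∃ v : (𝓞 K)ˣ, u = v ^ 2} := by
  classical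
  obtain ⟨φ₁, φ₂, hφ₁θ, hφ₂θ, hnorm⟩ := norm_form p hp K h2 θ hθ
  have hθint : IsIntegral ℤ θ :=
    ⟨X ^ 2 - C ((p : ℕ) : ℤ), monic_X_pow_sub_C _ two_ne_zero, by simp [hθ]⟩
  obtain ⟨a, b, hab⟩ := neg_pell' p hp hp4
  set θO : 𝓞 K := ⟨θ, hθint⟩ with hθO
  set α : 𝓞 K := (a : 𝓞 K) + (b : 𝓞 K) * θO with hα
  set β : 𝓞 K := (a : 𝓞 K) - (b : 𝓞 K) * θO with hβ
  have hθOK : (algebraMap (𝓞 K) K) θO = θ := rfl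
  have hαK : (algebraMap (𝓞 K) K) α = (a : K) + (b : K) * θ := by
    rw [hα, map_add, map_mul, map_natCast, map_natCast, hθOK]
  have hβK : (algebraMap (𝓞 K) K) β = (a : K) - (b : K) * θ := by
    rw [hβ, map_sub, map_mul, map_natCast, map_natCast, hθOK]
  have habK : (a : K) ^ 2 + 1 = ((p : ℕ) : K) * (b : K) ^ 2 := by exact_mod_cast hab
  have hαβ : α * β = -1 := by
    apply RingOfIntegers.ext
    push_cast [map_mul, hαK, hβK]
    linear_combination habK + (-((b : K) ^ 2)) * hθ
  have hαβ1 : α * (-β) = 1 := by rw [mul_neg, hαβ, neg_neg]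
  let αu : (𝓞 K)ˣ := ⟨α, -β, hαβ1, by rw [neg_mul, mul_comm β α, hαβ, neg_neg]⟩
  have habR : (a : ℝ) ^ 2 + 1 = ((p : ℕ) : ℝ) * (b : ℝ) ^ 2 := by exact_mod_cast hab
  have hsqR : Real.sqrt p ^ 2 = ((p : ℕ) : ℝ) := Real.sq_sqrt (by positivity)
  -- the norm of α is -1
  have hNα : Algebra.norm ℚ ((algebraMap (𝓞 K) K) α) = -1 := by
    have hφ₁α : φ₁ ((algebraMap (𝓞 K) K) α) = (a : ℝ) + (b : ℝ) * Real.sqrt p := by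
      rw [hαK, map_add, map_mul, map_natCast, map_natCast, hφ₁θ]
    have hφ₂α : φ₂ ((algebraMap (𝓞 K) K) α) = (a : ℝ) - (b : ℝ) * Real.sqrt p := by
      rw [hαK, map_add, map_mul, map_natCast, map_natCast, hφ₂θ]; ring
    have h1 := hnorm ((algebraMap (𝓞 K) K) α)
    rw [hφ₁α, hφ₂α] at h1
    have h2' : ((Algebra.norm ℚ ((algebraMap (𝓞 K) K) α) : ℚ) : ℝ) = -1 := by
      rw [h1]; linear_combination habR - (b : ℝ) ^ 2 * hsqR
    exact_mod_cast h2'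
  -- basic unit/norm machinery
  set e : K := (algebraMap (𝓞 K) K) (↑ε : 𝓞 K) with he
  let U : (𝓞 K)ˣ →* Kˣ := Units.map (algebraMap (𝓞 K) K).toMonoidHom
  have hcoe : ∀ n : ℤ, (algebraMap (𝓞 K) K) (↑(ε ^ n) : 𝓞 K) = e ^ n := by
    intro n
    calc (algebraMap (𝓞 K) K) (↑(ε ^ n) : 𝓞 K) = ((U (ε ^ n) : Kˣ) : K) := rfl
      _ = (((U ε) ^ n : Kˣ) : K) := by rw [map_zpow]
      _ = ((U ε : Kˣ) : K) ^ n := Units.val_zpow_eq_zpow_val _ _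
      _ = e ^ n := rfl
  let NH : K →*₀ ℚ :=
    { toFun := Algebra.norm ℚ, map_zero' := Algebra.norm_zero,
      map_one' := map_one _, map_mul' := map_mul _ }
  have hNzpow : ∀ n : ℤ, Algebra.norm ℚ (e ^ n) = (Algebra.norm ℚ e) ^ n :=
    fun n => map_zpow₀ NH e n
  have hNneg : ∀ x : K, Algebra.norm ℚ (-x) = Algebra.norm ℚ x := by
    intro x
    rw [show -x = (-1 : K) * x by ring, map_mul]
    rw [show (-1 : K) = algebraMap ℚ K (-1) by simp, Algebra.norm_algebraMap, h2]
    ring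
  -- norm of ε is ±1
  have htunit : IsUnit (Algebra.norm ℤ (↑ε : 𝓞 K)) := ε.isUnit.map (Algebra.norm ℤ)
  have ht1 : Algebra.norm ℚ e = 1 ∨ Algebra.norm ℚ e = -1 := by
    have hco : ((Algebra.norm ℤ (↑ε : 𝓞 K) : ℤ) : ℚ) = Algebra.norm ℚ e :=
      Algebra.coe_norm_int _
    rcases Int.isUnit_iff.mp htunit with h | h <;> rw [h] at hco <;>
      [left; right] <;> exact_mod_cast hco.symm
  -- norm of ε = -1
  obtain ⟨n₀, hn₀⟩ := hε αu
  have hαuval : (algebraMap (𝓞 K) K) (↑αu : 𝓞 K) = (algebraMap (𝓞 K) K) α := rfl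
  have htn : (Algebra.norm ℚ e) ^ n₀ = -1 := by
    rcases hn₀ with hn | hn
    · calc (Algebra.norm ℚ e) ^ n₀ = Algebra.norm ℚ (e ^ n₀) := (hNzpow n₀).symm
        _ = Algebra.norm ℚ ((algebraMap (𝓞 K) K) (↑(ε ^ n₀) : 𝓞 K)) := by rw [hcoe]
        _ = Algebra.norm ℚ ((algebraMap (𝓞 K) K) (↑αu : 𝓞 K)) := by rw [← hn]
        _ = -1 := by rw [hαuval]; exact hNα
    · have hval : (algebraMap (𝓞 K) K) (↑αu : 𝓞 K) = -(e ^ n₀) := by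
        rw [hn, Units.val_neg, map_neg, hcoe]
      calc (Algebra.norm ℚ e) ^ n₀ = Algebra.norm ℚ (e ^ n₀) := (hNzpow n₀).symm
        _ = Algebra.norm ℚ (-(e ^ n₀)) := (hNneg _).symm
        _ = Algebra.norm ℚ ((algebraMap (𝓞 K) K) (↑αu : 𝓞 K)) := by rw [hval]
        _ = -1 := by rw [hαuval]; exact hNα
  have hNε : Algebra.norm ℚ e = -1 := by
    rcases ht1 with h | h
    · exfalso
      rw [h, one_zpow] at htn
      norm_num at htn
    · exact h
  refine ⟨hNε, ?_⟩
  -- part 2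
  have he0 : e ≠ 0 := (U ε).ne_zero
  ext u
  simp only [Set.mem_setOf_eq]
  constructor
  · intro hu
    obtain ⟨n, hn⟩ := hε u
    set x : K := (algebraMap (𝓞 K) K) (↑u : 𝓞 K) with hx
    have hpos1 : 0 < φ₁ x := hu φ₁.toRingHom
    have hpos2 : 0 < φ₂ x := hu φ₂.toRingHom
    have hNpos : (0 : ℝ) < ((Algebra.norm ℚ x : ℚ) : ℝ) := by
      rw [hnorm x]; exact mul_pos hpos1 hpos2
    have hxval : x = e ^ n ∨ x = -(e ^ n) := by
      rcases hn with hn | hn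
      · left; rw [hx, hn, hcoe]
      · right; rw [hx, hn, Units.val_neg, map_neg, hcoe]
    have hNx : Algebra.norm ℚ x = (-1 : ℚ) ^ n := by
      rcases hxval with h | h
      · rw [h, hNzpow, hNε]
      · rw [h, hNneg, hNzpow, hNε]
    have heven : Even n := by
      by_contra hodd
      have ho : Odd n := Int.not_even_iff_odd.mp hodd
      rw [ho.neg_one_zpow] at hNx
      rw [hNx] at hNpos
      norm_num at hNpos
    obtain ⟨m, hm⟩ := heven
    have hpow : ε ^ n = (ε ^ m) ^ 2 := by
      rw [hm, zpow_add, sq]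
    rcases hn with hn | hn
    · exact ⟨ε ^ m, by rw [hn, hpow]⟩
    · exfalso
      have hx1 : x = -(e ^ n) := by rw [hx, hn, Units.val_neg, map_neg, hcoe]
      have hφ₁e : φ₁ e ≠ 0 := fun h0 =>
        he0 (φ₁.toRingHom.injective (show φ₁ e = φ₁ 0 by rw [map_zero]; exact h0))
      have hppos : (0 : ℝ) < (φ₁ e) ^ n := by
        rw [hm, zpow_add₀ hφ₁e]
        have h4 : (φ₁ e) ^ m * (φ₁ e) ^ m = ((φ₁ e) ^ m) ^ 2 := (sq _).symm
        rw [h4]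
        exact lt_of_le_of_ne (sq_nonneg _) (Ne.symm (pow_ne_zero 2 (zpow_ne_zero m hφ₁e)))
      have hzp : φ₁ (e ^ n) = (φ₁ e) ^ n := map_zpow₀ (φ₁ : K →+* ℝ) e n
      have : φ₁ x = -((φ₁ e) ^ n) := by rw [hx1, map_neg, hzp]
      rw [this] at hpos1
      linarith
  · rintro ⟨v, rfl⟩ φ
    have hval : (algebraMap (𝓞 K) K) (↑(v ^ 2) : 𝓞 K) =
        ((algebraMap (𝓞 K) K) (↑v : 𝓞 K)) ^ 2 := by
      rw [Units.val_pow_eq_pow_val, map_pow]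
    rw [hval, map_pow]
    have hv0 : (algebraMap (𝓞 K) K) (↑v : 𝓞 K) ≠ 0 := (U v).ne_zero
    have hφv : φ ((algebraMap (𝓞 K) K) (↑v : 𝓞 K)) ≠ 0 :=
      fun h0 => hv0 (φ.injective (by rw [h0, map_zero]))
    exact lt_of_le_of_ne (sq_nonneg _) (Ne.symm (pow_ne_zero 2 hφv))
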